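/- arXiv:1701.07192 — 4 statements merged into one kernel-verified Lean document; each statement's English description precedes it below -/
import Mathlib

section
/- In a regular ordered semigroup S, a bi-ideal B is minimal if and only if B is the intersection of a minimal left ideal and a minimal right ideal of S. -/
open Pointwise

variable {S : Type*} [Semigroup S] [PartialOrder S]
  [CovariantClass S S (· * ·) (· ≤ ·)]
  [CovariantClass S S (Function.swap (· * ·)) (· ≤ ·)]

/-- The downward closure `(H] = {t : t ≤ h for some h ∈ H}`. -/
def ocl (H : Set S) : Set S := {t | ∃ h ∈ H, t ≤ h}
/-- Principal left ideal `L(a) = (a ∪ Sa]`. -/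
def pL (a : S) : Set S := ocl ({a} ∪ Set.univ * {a})
/-- Principal right ideal `R(a) = (a ∪ aS]`. -/
def pR (a : S) : Set S := ocl ({a} ∪ {a} * Set.univ)
/-- Principal bi-ideal `B(a) = (a ∪ a² ∪ aSa]`. -/
def pB (a : S) : Set S := ocl ({a} ∪ {a * a} ∪ {a} * Set.univ * {a})
def LIdeal (I : Set S) : Prop := I.Nonempty ∧ Set.univ * I ⊆ I ∧ ocl I = I
def RIdeal (I : Set S) : Prop := I.Nonempty ∧ I * Set.univ ⊆ I ∧ ocl I = I
def BIdeal (B : Set S) : Prop :=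
  B.Nonempty ∧ B * B ⊆ B ∧ B * Set.univ * B ⊆ B ∧ ocl B = B
def MinBIdeal (B : Set S) : Prop :=
  BIdeal B ∧ ∀ K : Set S, BIdeal K → K ⊆ B → K = B
def MinLIdeal (I : Set S) : Prop :=
  LIdeal I ∧ ∀ K : Set S, LIdeal K → K ⊆ I → K = I
def MinRIdeal (I : Set S) : Prop :=
  RIdeal I ∧ ∀ K : Set S, RIdeal K → K ⊆ I → K = I
def OrdRegular (S : Type*) [Semigroup S] [PartialOrder S] : Prop :=
  ∀ a : S, ∃ s : S, a ≤ a * s * a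
def ComplRegular (S : Type*) [Semigroup S] [PartialOrder S] : Prop :=
  ∀ a : S, ∃ s : S, a ≤ a * a * s * (a * a)
/-- Green's H relation. -/
def HGreen (a b : S) : Prop := pL a = pL b ∧ pR a = pR b
/-- The relation β : `a β b` iff `B(a) = B(b)`. -/
def betaRel (a b : S) : Prop := pB a = pB b

section Helpers

lemma subset_ocl' (H : Set S) : H ⊆ ocl H := fun x hx => ⟨x, hx, le_refl x⟩

lemma ocl_mono' {A B : Set S} (hAB : A ⊆ B) : ocl A ⊆ ocl B :=
  fun x ⟨a, ha, hle⟩ => ⟨a, hAB ha, hle⟩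

lemma ocl_ocl (A : Set S) : ocl (ocl A) = ocl A := by
  apply Set.Subset.antisymm
  · rintro x ⟨y, ⟨z, hz, hyz⟩, hxy⟩
    exact ⟨z, hz, le_trans hxy hyz⟩
  · exact subset_ocl' _

lemma mem_sUs {a c x : S} : x ∈ ({a} * Set.univ * {c} : Set S) ↔ ∃ s, x = a * s * c := by
  constructor
  · rintro ⟨u, hu, v, hv, rfl⟩
    rcases hu with ⟨p, hp, q, hq, rfl⟩
    rcases hp with rfl
    rcases hv with rfl
    exact ⟨q, rfl⟩
  · rintro ⟨s, rfl⟩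
    exact Set.mul_mem_mul (Set.mul_mem_mul rfl trivial) rfl

lemma mem_Us {a x : S} : x ∈ (Set.univ * {a} : Set S) ↔ ∃ s, x = s * a := by
  constructor
  · rintro ⟨u, _, v, hv, rfl⟩
    rcases hv with rfl
    exact ⟨u, rfl⟩
  · rintro ⟨s, rfl⟩
    exact Set.mul_mem_mul trivial rfl

lemma mem_sU {a x : S} : x ∈ ({a} * Set.univ : Set S) ↔ ∃ s, x = a * s := by
  constructor
  · rintro ⟨u, hu, v, _, rfl⟩
    rcases hu with rfl
    exact ⟨v, rfl⟩
  · rintro ⟨s, rfl⟩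
    exact Set.mul_mem_mul rfl trivial

/-- `(Sa]` is a left ideal. -/
lemma lideal_ocl (a : S) : LIdeal (ocl (Set.univ * ({a} : Set S))) := by
  refine ⟨⟨a * a, subset_ocl' _ (mem_Us.2 ⟨a, rfl⟩)⟩, ?_, ocl_ocl _⟩
  rintro x ⟨u, _, v, ⟨w, hw, hvw⟩, rfl⟩
  rcases mem_Us.1 hw with ⟨s, rfl⟩
  exact ⟨u * s * a, mem_Us.2 ⟨u * s, by rw [mul_assoc]⟩,
    by calc u * v ≤ u * (s * a) := mul_le_mul' le_rfl hvw
      _ = u * s * a := by rw [mul_assoc]⟩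

/-- `(aS]` is a right ideal. -/
lemma rideal_ocl (a : S) : RIdeal (ocl (({a} : Set S) * Set.univ)) := by
  refine ⟨⟨a * a, subset_ocl' _ (mem_sU.2 ⟨a, rfl⟩)⟩, ?_, ocl_ocl _⟩
  rintro x ⟨u, ⟨w, hw, huw⟩, v, _, rfl⟩
  rcases mem_sU.1 hw with ⟨s, rfl⟩
  exact ⟨a * (s * v), mem_sU.2 ⟨s * v, rfl⟩,
    by calc u * v ≤ a * s * v := mul_le_mul' huw le_rfl
      _ = a * (s * v) := by rw [mul_assoc]⟩

/-- `(aSc]` is a bi-ideal. -/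
lemma bideal_ocl (a c : S) : BIdeal (ocl (({a} : Set S) * Set.univ * {c})) := by
  have hne : (ocl (({a} : Set S) * Set.univ * {c})).Nonempty :=
    ⟨a * a * c, subset_ocl' _ (mem_sUs.2 ⟨a, rfl⟩)⟩
  refine ⟨hne, ?_, ?_, ocl_ocl _⟩
  · rintro x ⟨u, ⟨p, hp, hup⟩, v, ⟨q, hq, hvq⟩, rfl⟩
    rcases mem_sUs.1 hp with ⟨s, rfl⟩
    rcases mem_sUs.1 hq with ⟨t, rfl⟩
    refine ⟨a * (s * c * (a * t)) * c, mem_sUs.2 ⟨s * c * (a * t), rfl⟩, ?_⟩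
    calc u * v ≤ (a * s * c) * (a * t * c) := mul_le_mul' hup hvq
      _ = a * (s * c * (a * t)) * c := by simp only [mul_assoc]
  · rintro x ⟨w, ⟨u, ⟨p, hp, hup⟩, z, _, rfl⟩, v, ⟨q, hq, hvq⟩, rfl⟩
    rcases mem_sUs.1 hp with ⟨s, rfl⟩
    rcases mem_sUs.1 hq with ⟨t, rfl⟩
    refine ⟨a * (s * c * z * (a * t)) * c, mem_sUs.2 ⟨s * c * z * (a * t), rfl⟩, ?_⟩
    calc u * z * v ≤ (a * s * c) * z * (a * t * c) :=
          mul_le_mul' (mul_le_mul' hup le_rfl) hvq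
      _ = a * (s * c * z * (a * t)) * c := by simp only [mul_assoc]

end Helpers

theorem stmt8 (h : OrdRegular S) (B : Set S) (hB : BIdeal B) :
    MinBIdeal B ↔ ∃ L R : Set S, MinLIdeal L ∧ MinRIdeal R ∧ B = L ∩ R := by
  constructor
  · rintro ⟨hBid, hmin⟩
    obtain ⟨b, hbB⟩ := hBid.1
    -- `B = (bSb]`
    have hBab : ocl (({b} : Set S) * Set.univ * {b}) ⊆ B := by
      rintro x ⟨w, hw, hxw⟩
      rcases mem_sUs.1 hw with ⟨s, rfl⟩
      rw [← hBid.2.2.2]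
      exact ⟨b * s * b, hBid.2.2.1 (Set.mul_mem_mul (Set.mul_mem_mul hbB trivial) hbB), hxw⟩
    have hBeq : ocl (({b} : Set S) * Set.univ * {b}) = B := hmin _ (bideal_ocl b b) hBab
    refine ⟨ocl (Set.univ * {b}), ocl (({b} : Set S) * Set.univ),
      ⟨lideal_ocl b, ?_⟩, ⟨rideal_ocl b, ?_⟩, ?_⟩
    · -- minimality of L = (Sb]
      intro K hK hKL
      obtain ⟨a, haK⟩ := hK.1
      have hKb : ocl (({b} : Set S) * Set.univ * {a}) ⊆ B := by
        rintro x ⟨w, hw, hxw⟩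
        rcases mem_sUs.1 hw with ⟨s, rfl⟩
        obtain ⟨w', hw', haw⟩ := hKL haK
        rcases mem_Us.1 hw' with ⟨u, rfl⟩
        rw [← hBeq]
        refine ⟨b * (s * u) * b, mem_sUs.2 ⟨s * u, rfl⟩, le_trans hxw ?_⟩
        calc b * s * a ≤ b * s * (u * b) := mul_le_mul' le_rfl haw
          _ = b * (s * u) * b := by simp only [mul_assoc]
      have hKeq := hmin _ (bideal_ocl b a) hKb
      have hbK : b ∈ K := by
        have hbmem : b ∈ ocl (({b} : Set S) * Set.univ * {a}) := hKeq ▸ hbB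
        obtain ⟨w, hw, hbw⟩ := hbmem
        rcases mem_sUs.1 hw with ⟨t, rfl⟩
        rw [← hK.2.2]
        exact ⟨b * t * a, hK.2.1 (Set.mul_mem_mul trivial haK), hbw⟩
      apply Set.Subset.antisymm hKL
      rintro x ⟨w, hw, hxw⟩
      rcases mem_Us.1 hw with ⟨u, rfl⟩
      rw [← hK.2.2]
      exact ⟨u * b, hK.2.1 (Set.mul_mem_mul trivial hbK), hxw⟩
    · -- minimality of R = (bS]
      intro K hK hKR
      obtain ⟨a, haK⟩ := hK.1
      have hKb : ocl (({a} : Set S) * Set.univ * {b}) ⊆ B := by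
        rintro x ⟨w, hw, hxw⟩
        rcases mem_sUs.1 hw with ⟨s, rfl⟩
        obtain ⟨w', hw', haw⟩ := hKR haK
        rcases mem_sU.1 hw' with ⟨u, rfl⟩
        rw [← hBeq]
        refine ⟨b * (u * s) * b, mem_sUs.2 ⟨u * s, rfl⟩, le_trans hxw ?_⟩
        calc a * s * b ≤ (b * u) * s * b := mul_le_mul' (mul_le_mul' haw le_rfl) le_rfl
          _ = b * (u * s) * b := by simp only [mul_assoc]
      have hKeq := hmin _ (bideal_ocl a b) hKb
      have hbK : b ∈ K := by
        have hbmem : b ∈ ocl (({a} : Set S) * Set.univ * {b}) := hKeq ▸ hbB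
        obtain ⟨w, hw, hbw⟩ := hbmem
        rcases mem_sUs.1 hw with ⟨t, rfl⟩
        rw [← hK.2.2]
        refine ⟨a * (t * b), hK.2.1 (Set.mul_mem_mul haK trivial), ?_⟩
        calc b ≤ a * t * b := hbw
          _ = a * (t * b) := by rw [mul_assoc]
      apply Set.Subset.antisymm hKR
      rintro x ⟨w, hw, hxw⟩
      rcases mem_sU.1 hw with ⟨u, rfl⟩
      rw [← hK.2.2]
      exact ⟨b * u, hK.2.1 (Set.mul_mem_mul hbK trivial), hxw⟩
    · -- B = L ∩ R
      apply Set.Subset.antisymm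
      · rw [← hBeq]
        rintro x ⟨w, hw, hxw⟩
        rcases mem_sUs.1 hw with ⟨s, rfl⟩
        exact ⟨⟨b * s * b, mem_Us.2 ⟨b * s, rfl⟩, hxw⟩,
          ⟨b * s * b, mem_sU.2 ⟨s * b, by rw [mul_assoc]⟩, hxw⟩⟩
      · rintro x ⟨hxL, hxR⟩
        obtain ⟨s, hs⟩ := h x
        obtain ⟨w1, hw1, hx1⟩ := hxL
        rcases mem_Us.1 hw1 with ⟨u, rfl⟩
        obtain ⟨w2, hw2, hx2⟩ := hxR
        rcases mem_sU.1 hw2 with ⟨v, rfl⟩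
        rw [← hBeq]
        refine ⟨b * (v * s * u) * b, mem_sUs.2 ⟨v * s * u, rfl⟩, ?_⟩
        calc x ≤ x * s * x := hs
          _ ≤ (b * v) * s * (u * b) := mul_le_mul' (mul_le_mul' hx2 le_rfl) hx1
          _ = b * (v * s * u) * b := by simp only [mul_assoc]
  · rintro ⟨L, R, ⟨hL, hLmin⟩, ⟨hR, hRmin⟩, rfl⟩
    refine ⟨hB, ?_⟩
    intro K hK hKB
    obtain ⟨a, haK⟩ := hK.1
    have haL : a ∈ L := (hKB haK).1
    have haR : a ∈ R := (hKB haK).2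
    have hLa : ocl (Set.univ * ({a} : Set S)) = L := by
      apply hLmin _ (lideal_ocl a)
      rintro x ⟨w, hw, hxw⟩
      rcases mem_Us.1 hw with ⟨u, rfl⟩
      rw [← hL.2.2]
      exact ⟨u * a, hL.2.1 (Set.mul_mem_mul trivial haL), hxw⟩
    have hRa : ocl (({a} : Set S) * Set.univ) = R := by
      apply hRmin _ (rideal_ocl a)
      rintro x ⟨w, hw, hxw⟩
      rcases mem_sU.1 hw with ⟨u, rfl⟩
      rw [← hR.2.2]
      exact ⟨a * u, hR.2.1 (Set.mul_mem_mul haR trivial), hxw⟩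
    apply Set.Subset.antisymm hKB
    rintro x ⟨hxL, hxR⟩
    obtain ⟨s, hs⟩ := h x
    rw [← hLa] at hxL
    rw [← hRa] at hxR
    obtain ⟨w1, hw1, hx1⟩ := hxL
    rcases mem_Us.1 hw1 with ⟨u, rfl⟩
    obtain ⟨w2, hw2, hx2⟩ := hxR
    rcases mem_sU.1 hw2 with ⟨v, rfl⟩
    rw [← hK.2.2.2]
    refine ⟨a * (v * s * u) * a,
      hK.2.2.1 (Set.mul_mem_mul (Set.mul_mem_mul haK trivial) haK), ?_⟩
    calc x ≤ x * s * x := hs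
      _ ≤ (a * v) * s * (u * a) := mul_le_mul' (mul_le_mul' hx2 le_rfl) hx1
      _ = a * (v * s * u) * a := by simp only [mul_assoc]
end

section
/- In an ordered semigroup S, a bi-ideal B is minimal if and only if B is a single β-class, where a β b iff B(a) = B(b). -/
open Pointwise

variable {S : Type*} [Semigroup S] [PartialOrder S]
  [CovariantClass S S (· * ·) (· ≤ ·)]
  [CovariantClass S S (Function.swap (· * ·)) (· ≤ ·)]

lemma self_mem_pB (a : S) : a ∈ pB a :=
  ⟨a, Or.inl (Or.inl rfl), le_rfl⟩

lemma mem_gen {a h : S} :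
    h ∈ ({a} ∪ {a * a} ∪ {a} * (Set.univ : Set S) * {a}) ↔
      (a = h ∨ a * a = h ∨ ∃ s, a * s * a = h) := by
  constructor
  · rintro ((hx | hx) | hx)
    · exact Or.inl hx.symm
    · exact Or.inr (Or.inl hx.symm)
    · obtain ⟨y, hy, z, hz, rfl⟩ := hx
      obtain ⟨u, hu, v, -, rfl⟩ := hy
      rw [Set.mem_singleton_iff] at hu hz
      subst hu; subst hz
      exact Or.inr (Or.inr ⟨v, rfl⟩)
  · rintro (rfl | rfl | ⟨s, rfl⟩)
    · exact Or.inl (Or.inl rfl)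
    · exact Or.inl (Or.inr rfl)
    · exact Or.inr ⟨a * s, ⟨a, rfl, s, trivial, rfl⟩, a, rfl, rfl⟩

lemma gen_mul {a h h' : S}
    (hh : a = h ∨ a * a = h ∨ ∃ s, a * s * a = h)
    (hh' : a = h' ∨ a * a = h' ∨ ∃ s, a * s * a = h') :
    a = h * h' ∨ a * a = h * h' ∨ ∃ s, a * s * a = h * h' := by
  rcases hh with rfl | rfl | ⟨s, rfl⟩ <;> rcases hh' with rfl | rfl | ⟨t, rfl⟩
  · exact Or.inr (Or.inl rfl)
  · exact Or.inr (Or.inr ⟨a, by simp [mul_assoc]⟩)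
  · exact Or.inr (Or.inr ⟨a * t, by simp [mul_assoc]⟩)
  · exact Or.inr (Or.inr ⟨a, by simp [mul_assoc]⟩)
  · exact Or.inr (Or.inr ⟨a * a, by simp [mul_assoc]⟩)
  · exact Or.inr (Or.inr ⟨a * a * t, by simp [mul_assoc]⟩)
  · exact Or.inr (Or.inr ⟨s * a, by simp [mul_assoc]⟩)
  · exact Or.inr (Or.inr ⟨s * a * a, by simp [mul_assoc]⟩)
  · exact Or.inr (Or.inr ⟨s * a * a * t, by simp [mul_assoc]⟩)

lemma gen_mul_mid {a u h h' : S}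
    (hh : a = h ∨ a * a = h ∨ ∃ s, a * s * a = h)
    (hh' : a = h' ∨ a * a = h' ∨ ∃ s, a * s * a = h') :
    ∃ s, a * s * a = h * u * h' := by
  rcases hh with rfl | rfl | ⟨s, rfl⟩ <;> rcases hh' with rfl | rfl | ⟨t, rfl⟩
  · exact ⟨u, by simp [mul_assoc]⟩
  · exact ⟨u * a, by simp [mul_assoc]⟩
  · exact ⟨u * a * t, by simp [mul_assoc]⟩
  · exact ⟨a * u, by simp [mul_assoc]⟩
  · exact ⟨a * u * a, by simp [mul_assoc]⟩
  · exact ⟨a * u * a * t, by simp [mul_assoc]⟩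
  · exact ⟨s * a * u, by simp [mul_assoc]⟩
  · exact ⟨s * a * u * a, by simp [mul_assoc]⟩
  · exact ⟨s * a * u * a * t, by simp [mul_assoc]⟩

lemma pB_biideal (a : S) : BIdeal (pB a) := by
  refine ⟨⟨a, self_mem_pB a⟩, ?_, ?_, ?_⟩
  · rintro z ⟨x, ⟨h, hh, hxh⟩, y, ⟨h', hh', hyh'⟩, rfl⟩
    exact ⟨h * h', mem_gen.2 (gen_mul (mem_gen.1 hh) (mem_gen.1 hh')),
      mul_le_mul' hxh hyh'⟩
  · rintro z ⟨w, ⟨x, ⟨h, hh, hxh⟩, u, -, rfl⟩, y, ⟨h', hh', hyh'⟩, rfl⟩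
    obtain ⟨s, hs⟩ := gen_mul_mid (u := u) (mem_gen.1 hh) (mem_gen.1 hh')
    exact ⟨h * u * h', mem_gen.2 (Or.inr (Or.inr ⟨s, hs⟩)),
      mul_le_mul' (mul_le_mul' hxh le_rfl) hyh'⟩
  · apply Set.Subset.antisymm
    · rintro t ⟨x, ⟨h, hh, hxh⟩, htx⟩
      exact ⟨h, hh, le_trans htx hxh⟩
    · intro t ht
      exact ⟨t, ht, le_rfl⟩

lemma pB_subset {B : Set S} (hB : BIdeal B) {a : S} (ha : a ∈ B) : pB a ⊆ B := by
  obtain ⟨-, hmul, hbsb, hocl⟩ := hB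
  rintro t ⟨h, hh, hth⟩
  rw [← hocl]
  refine ⟨h, ?_, hth⟩
  rcases mem_gen.1 hh with rfl | rfl | ⟨s, rfl⟩
  · exact ha
  · exact hmul ⟨a, ha, a, ha, rfl⟩
  · exact hbsb ⟨a * s, ⟨a, ha, s, trivial, rfl⟩, a, ha, rfl⟩

theorem stmt12 (B : Set S) (hB : BIdeal B) :
    MinBIdeal B ↔ ∃ b : S, B = {x : S | betaRel x b} := by
  constructor
  · rintro ⟨-, hmin⟩
    obtain ⟨b, hb⟩ := hB.1
    have hBb : pB b = B := hmin _ (pB_biideal b) (pB_subset hB hb)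
    refine ⟨b, Set.ext fun x => ?_⟩
    constructor
    · intro hx
      have hx' : pB x = B := hmin _ (pB_biideal x) (pB_subset hB hx)
      exact hx'.trans hBb.symm
    · intro hx
      have := self_mem_pB x
      rw [show pB x = pB b from hx, hBb] at this
      exact this
  · rintro ⟨b, rfl⟩
    refine ⟨hB, fun K hK hKB => ?_⟩
    obtain ⟨k, hk⟩ := hK.1
    have hkB : pB k = pB b := hKB hk
    have h1 : pB b ⊆ K := hkB ▸ pB_subset hK hk
    refine Set.Subset.antisymm hKB fun x hx => h1 ?_
    have := self_mem_pB x
    rwa [show pB x = pB b from hx] at this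
end

section
/- In a regular ordered semigroup S, a bi-ideal B is minimal if and only if B is an H-class of S. -/
open Pointwise

variable {S : Type*} [Semigroup S] [PartialOrder S]
  [CovariantClass S S (· * ·) (· ≤ ·)]
  [CovariantClass S S (Function.swap (· * ·)) (· ≤ ·)]

/-! ### Auxiliary lemmas -/

/-- The principal "regular" bi-ideal `(bSb]`. -/
def biB (b : S) : Set S := ocl ({b} * Set.univ * {b})

lemma mem_biB {b x : S} : x ∈ biB b ↔ ∃ t : S, x ≤ b * t * b := by
  constructor
  · rintro ⟨g, hg, hx⟩
    simp only [Set.mem_mul, Set.mem_singleton_iff, Set.mem_univ] at hg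
    obtain ⟨p, ⟨q, hq, t, -, rfl⟩, r, rfl, rfl⟩ := hg
    exact ⟨t, hq ▸ hx⟩
  · rintro ⟨t, hx⟩
    refine ⟨b * t * b, ?_, hx⟩
    exact ⟨b * t, ⟨b, rfl, t, trivial, rfl⟩, b, rfl, rfl⟩

lemma mem_pL {a z : S} : z ∈ pL a ↔ z ≤ a ∨ ∃ u, z ≤ u * a := by
  constructor
  · rintro ⟨g, hg, hz⟩
    rcases hg with hg | hg
    · exact Or.inl (hg ▸ hz)
    · obtain ⟨u, -, w, rfl, rfl⟩ := hg
      exact Or.inr ⟨u, hz⟩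
  · rintro (hz | ⟨u, hz⟩)
    · exact ⟨a, Or.inl rfl, hz⟩
    · exact ⟨u * a, Or.inr ⟨u, trivial, a, rfl, rfl⟩, hz⟩

lemma mem_pR {a z : S} : z ∈ pR a ↔ z ≤ a ∨ ∃ u, z ≤ a * u := by
  constructor
  · rintro ⟨g, hg, hz⟩
    rcases hg with hg | hg
    · exact Or.inl (hg ▸ hz)
    · obtain ⟨w, rfl, u, -, rfl⟩ := hg
      exact Or.inr ⟨u, hz⟩
  · rintro (hz | ⟨u, hz⟩)
    · exact ⟨a, Or.inl rfl, hz⟩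
    · exact ⟨a * u, Or.inr ⟨a, rfl, u, trivial, rfl⟩, hz⟩

/-- `(bSb]` is a bi-ideal (regularity gives nonemptiness). -/
lemma biB_bideal (h : OrdRegular S) (b : S) : BIdeal (biB b) := by
  refine ⟨?_, ?_, ?_, ?_⟩
  · obtain ⟨s, hs⟩ := h b
    exact ⟨b, mem_biB.mpr ⟨s, hs⟩⟩
  · rintro z ⟨x, hx, y, hy, rfl⟩
    obtain ⟨t, ht⟩ := mem_biB.mp hx
    obtain ⟨u, hu⟩ := mem_biB.mp hy
    refine mem_biB.mpr ⟨t * b * b * u, ?_⟩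
    calc x * y ≤ (b * t * b) * (b * u * b) := mul_le_mul' ht hu
      _ = b * (t * b * b * u) * b := by simp [mul_assoc]
  · rintro z ⟨p, ⟨x, hx, w, -, rfl⟩, y, hy, rfl⟩
    obtain ⟨t, ht⟩ := mem_biB.mp hx
    obtain ⟨u, hu⟩ := mem_biB.mp hy
    refine mem_biB.mpr ⟨t * b * w * b * u, ?_⟩
    calc x * w * y ≤ (b * t * b) * w * (b * u * b) :=
          mul_le_mul' (mul_le_mul' ht le_rfl) hu
      _ = b * (t * b * w * b * u) * b := by simp [mul_assoc]
  · apply Set.Subset.antisymm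
    · rintro z ⟨g, hg, hz⟩
      obtain ⟨t, ht⟩ := mem_biB.mp hg
      exact mem_biB.mpr ⟨t, hz.trans ht⟩
    · exact fun z hz => ⟨z, hz, le_rfl⟩

/-- `(bSb] ⊆ B` whenever `B` is a bi-ideal containing `b`. -/
lemma biB_subset {B : Set S} (hB : BIdeal B) {b : S} (hb : b ∈ B) :
    biB b ⊆ B := by
  rintro z hz
  obtain ⟨t, ht⟩ := mem_biB.mp hz
  have : b * t * b ∈ B := hB.2.2.1 ⟨b * t, ⟨b, hb, t, trivial, rfl⟩, b, hb, rfl⟩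
  exact hB.2.2.2 ▸ ⟨b * t * b, this, ht⟩

/-- Key lemma: if `x H k` then `x ∈ (kSk]`. -/
lemma hgreen_mem_biB (h : OrdRegular S) {x k : S} (hxk : HGreen x k) :
    x ∈ biB k := by
  obtain ⟨s, hs⟩ := h x
  have hR : x * s ∈ pR k := hxk.2 ▸ (mem_pR.mpr (Or.inr ⟨s, le_rfl⟩))
  have hL : s * x ∈ pL k := hxk.1 ▸ (mem_pL.mpr (Or.inr ⟨s, le_rfl⟩))
  rw [mem_pR] at hR
  rw [mem_pL] at hL
  have key : x ≤ (x * s) * x * (s * x) := by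
    calc x ≤ x * s * x := hs
      _ ≤ x * s * (x * s * x) := mul_le_mul_right hs _
      _ = (x * s) * x * (s * x) := by simp [mul_assoc]
  rcases hR with hA | ⟨u, hA⟩ <;> rcases hL with hC | ⟨v, hC⟩
  · exact mem_biB.mpr ⟨x, key.trans (mul_le_mul' (mul_le_mul' hA le_rfl) hC)⟩
  · refine mem_biB.mpr ⟨x * v, key.trans ?_⟩
    calc (x * s) * x * (s * x) ≤ k * x * (v * k) :=
          mul_le_mul' (mul_le_mul' hA le_rfl) hC
      _ = k * (x * v) * k := by simp [mul_assoc]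
  · refine mem_biB.mpr ⟨u * x, key.trans ?_⟩
    calc (x * s) * x * (s * x) ≤ (k * u) * x * k :=
          mul_le_mul' (mul_le_mul' hA le_rfl) hC
      _ = k * (u * x) * k := by simp [mul_assoc]
  · refine mem_biB.mpr ⟨u * x * v, key.trans ?_⟩
    calc (x * s) * x * (s * x) ≤ (k * u) * x * (v * k) :=
          mul_le_mul' (mul_le_mul' hA le_rfl) hC
      _ = k * (u * x * v) * k := by simp [mul_assoc]

lemma pLR_subset {x b t : S} (hx : x ≤ b * t * b) :
    pL x ⊆ pL b ∧ pR x ⊆ pR b := by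
  constructor
  · intro z hz
    rcases mem_pL.mp hz with hz | ⟨u, hz⟩
    · exact mem_pL.mpr (Or.inr ⟨b * t, hz.trans hx⟩)
    · refine mem_pL.mpr (Or.inr ⟨u * (b * t), ?_⟩)
      calc z ≤ u * x := hz
        _ ≤ u * (b * t * b) := mul_le_mul_right hx _
        _ = u * (b * t) * b := by simp [mul_assoc]
  · intro z hz
    rcases mem_pR.mp hz with hz | ⟨u, hz⟩
    · refine mem_pR.mpr (Or.inr ⟨t * b, hz.trans (hx.trans_eq (by simp [mul_assoc]))⟩)
    · refine mem_pR.mpr (Or.inr ⟨t * b * u, ?_⟩)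
      calc z ≤ x * u := hz
        _ ≤ (b * t * b) * u := mul_le_mul_left hx _
        _ = b * (t * b * u) := by simp [mul_assoc]

/-- If `biB x = biB b` then `x H b`. -/
lemma hgreen_of_biB_eq (h : OrdRegular S) {x b : S} (hxb : biB x = biB b) :
    HGreen x b := by
  obtain ⟨s, hs⟩ := h x
  obtain ⟨t, ht⟩ := mem_biB.mp (hxb ▸ mem_biB.mpr ⟨s, hs⟩ : x ∈ biB b)
  obtain ⟨s', hs'⟩ := h b
  obtain ⟨u, hu⟩ := mem_biB.mp (hxb ▸ mem_biB.mpr ⟨s', hs'⟩ : b ∈ biB x)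
  obtain ⟨hL1, hR1⟩ := pLR_subset ht
  obtain ⟨hL2, hR2⟩ := pLR_subset hu
  exact ⟨Set.Subset.antisymm hL1 hL2, Set.Subset.antisymm hR1 hR2⟩

theorem stmt13 (h : OrdRegular S) (B : Set S) (hB : BIdeal B) :
    MinBIdeal B ↔ ∃ b : S, B = {x : S | HGreen x b} := by
  constructor
  · rintro ⟨-, hmin⟩
    obtain ⟨b, hb⟩ := hB.1
    refine ⟨b, Set.Subset.antisymm ?_ ?_⟩
    · intro x hx
      have h1 : biB x = B := hmin _ (biB_bideal h x) (biB_subset hB hx)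
      have h2 : biB b = B := hmin _ (biB_bideal h b) (biB_subset hB hb)
      exact hgreen_of_biB_eq h (h1.trans h2.symm)
    · intro x hx
      exact biB_subset hB hb (hgreen_mem_biB h hx)
  · rintro ⟨b, rfl⟩
    refine ⟨hB, fun K hK hKB => Set.Subset.antisymm hKB ?_⟩
    obtain ⟨k, hk⟩ := hK.1
    have hkb : HGreen k b := hKB hk
    intro x hx
    have hxk : HGreen x k := ⟨hx.1.trans hkb.1.symm, hx.2.trans hkb.2.symm⟩
    exact biB_subset hK hk (hgreen_mem_biB h hxk)
end

section
/- An ordered semigroup S is completely regular if and only if B(a) = B(a²) for every a ∈ S. -/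
open Pointwise

variable {S : Type*} [Semigroup S] [PartialOrder S]
  [CovariantClass S S (· * ·) (· ≤ ·)]
  [CovariantClass S S (Function.swap (· * ·)) (· ≤ ·)]

set_option linter.unusedSectionVars false in
lemma mem_pB' {a x : S} : x ∈ pB a ↔ x ≤ a ∨ x ≤ a * a ∨ ∃ t, x ≤ a * t * a := by
  simp only [pB, ocl, Set.mem_setOf_eq, Set.mem_union, Set.mem_singleton_iff, Set.mem_mul]
  constructor
  · rintro ⟨h, ((rfl | rfl) | ⟨u, ⟨p, rfl, q, hq, rfl⟩, v, rfl, rfl⟩), hle⟩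
    · exact Or.inl hle
    · exact Or.inr (Or.inl hle)
    · exact Or.inr (Or.inr ⟨q, hle⟩)
  · rintro (h | h | ⟨t, h⟩)
    · exact ⟨a, Or.inl (Or.inl rfl), h⟩
    · exact ⟨a * a, Or.inl (Or.inr rfl), h⟩
    · exact ⟨a * t * a, Or.inr ⟨a * t, ⟨a, rfl, t, Set.mem_univ t, rfl⟩, a, rfl, rfl⟩, h⟩

theorem stmt18 :
    ComplRegular S ↔ ∀ a : S, pB a = pB (a * a) := by
  constructor
  · intro hCR a
    ext x
    rw [mem_pB', mem_pB']
    constructor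
    · rintro (h | h | ⟨t, h⟩)
      · obtain ⟨s, hs⟩ := hCR a
        exact Or.inr (Or.inr ⟨s, h.trans hs⟩)
      · exact Or.inl h
      · obtain ⟨s, hs⟩ := hCR a
        refine Or.inr (Or.inr ⟨s * (a * a) * t * (a * a * s), ?_⟩)
        have h2 : a * t * a ≤ (a * a * s * (a * a)) * t * (a * a * s * (a * a)) :=
          mul_le_mul' (mul_le_mul' hs le_rfl) hs
        exact h.trans (h2.trans (le_of_eq (by simp [mul_assoc])))
    · rintro (h | h | ⟨t, h⟩)
      · exact Or.inr (Or.inl h)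
      · exact Or.inr (Or.inr ⟨a * a, h.trans (le_of_eq (by simp [mul_assoc]))⟩)
      · exact Or.inr (Or.inr ⟨a * t * a, h.trans (le_of_eq (by simp [mul_assoc]))⟩)
  · intro hB a
    have ha : a ∈ pB (a * a) := by
      rw [← hB a, mem_pB']
      exact Or.inl le_rfl
    rw [mem_pB'] at ha
    rcases ha with h | h | ⟨t, h⟩
    · -- a ≤ a², so a ≤ a⁵ = a*a*a*(a*a)
      refine ⟨a, ?_⟩
      calc a ≤ a * a := h
        _ ≤ (a * a) * (a * a) := mul_le_mul' h h
        _ ≤ ((a * a) * a) * (a * a) := mul_le_mul' (mul_le_mul' h le_rfl) le_rfl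
    · -- a ≤ a⁴
      refine ⟨a * (a * a), ?_⟩
      have h2 : a * a ≤ a * ((a * a) * (a * a)) := mul_le_mul' le_rfl h
      calc a ≤ (a * a) * (a * a) := h
        _ ≤ (a * a) * (a * ((a * a) * (a * a))) := mul_le_mul' le_rfl h2
        _ = a * a * (a * (a * a)) * (a * a) := by simp [mul_assoc]
    · exact ⟨t, h⟩
end
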